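/- arXiv:2211.04922 — 2 statements merged into one kernel-verified Lean document; each statement's English description precedes it below -/
import Mathlib

section
/- Let D = (V, A) be a directed graph with s, t ∈ V, let 𝒫 be the set of simple s-t-paths viewed as subsets of V ∪ A, and let ρ, μ ∈ [0,1]^{V∪A} with ∑_{e∈P} ρ_e ≥ 1 − ∑_{e∈P} μ_e for all P ∈ 𝒫. Let d_v (resp. d_a) be the shortest-path distance from s to v (resp. to the tail of a, plus the cost of the tail) with respect to costs μ_e + ρ_e on nodes and arcs, counting the cost of all nodes and arcs strictly before the element; set α_e := min{d_e, 1 − ρ_e}. Then for τ uniform on [0,1], the random set S_τ := {e : α_e ≤ τ < α_e + ρ_e} satisfies Pr[e ∈ S_τ] = ρ_e for all e and Pr[S_τ ∩ P ≠ ∅] ≥ 1 − ∑_{e∈P} μ_e for all s-t-paths P. -/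
open Finset MeasureTheory

variable {V : Type*} [Fintype V] [DecidableEq V]

/-- `p` is a simple path from `s` to `v` in the digraph with arc set `Arcs`,
given as its sequence of nodes. -/
def IsPathOn (Arcs : Finset (V × V)) (s v : V) (p : List V) : Prop :=
  p.head? = some s ∧ p.getLast? = some v ∧ p.Nodup ∧
    p.Chain' (fun u w => (u, w) ∈ Arcs)

/-- The set of elements (nodes and arcs) of a path given by its node sequence. -/
def pathElems (p : List V) : Finset (V ⊕ V × V) :=
  p.toFinset.image Sum.inl ∪ (p.zip p.tail).toFinset.image Sum.inr

/-- The level set `S_τ = {e : α_e ≤ τ < α_e + ρ_e}`. -/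
noncomputable def levelSet (α ρ : V ⊕ V × V → ℝ) (τ : ℝ) : Finset (V ⊕ V × V) :=
  Finset.univ.filter (fun e => α e ≤ τ ∧ τ < α e + ρ e)

/-!
Since `0 ≤ α e ≤ 1 - ρ e`, the element `e` lies in `S_τ` exactly for `τ` in
`[α e, α e + ρ e) ⊆ [0, 1)`, which gives the marginals. For the hitting bound, attach to each
element `e` of an `s`-`t`-path the interval `[α e, α e + ρ e + μ e)`. Because `α` is a truncated
shortest-path distance, walking along the path each interval starts no later than the previous
one ends, unless that one was truncated and so reaches `1`; the first starts at `α s = 0` and the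
last reaches `1` by feasibility of the path. Hence these intervals cover `[0, 1)`, and removing
the pieces `[α e + ρ e, α e + ρ e + μ e)`, of total length at most `∑ μ e`, leaves a subset of
`{τ | S_τ meets the path}`.
-/

section Paths

variable {N : Type*} {Arcs : Finset (N × N)}

lemma isPathOn_iff {s v : N} {p : List N} :
    IsPathOn Arcs s v p ↔
      p.head? = some s ∧ p.getLast? = some v ∧ p.Nodup ∧ p.IsChain (fun u w => (u, w) ∈ Arcs) :=
  Iff.rfl

lemma isPathOn_singleton (s : N) : IsPathOn Arcs s s [s] := by
  simp [isPathOn_iff]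

lemma IsPathOn.concat {s u v : N} {p : List N} (hp : IsPathOn Arcs s u p) (huv : (u, v) ∈ Arcs)
    (hv : v ∉ p) : IsPathOn Arcs s v (p ++ [v]) := by
  obtain ⟨hs, hu, hnd, hch⟩ := isPathOn_iff.1 hp
  have hnd' : (p ++ [v]).Nodup := List.nodup_append.2
    ⟨hnd, by simp, by rintro x hx _ hy rfl; exact hv (List.mem_singleton.1 hy ▸ hx)⟩
  exact ⟨by simp [hs], by simp, hnd', hch.append (.singleton v) (by simpa [hu])⟩

variable [DecidableEq N]

lemma mem_pathElems_inl {p : List N} {x : N} : Sum.inl x ∈ pathElems p ↔ x ∈ p := by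
  simp [pathElems]

lemma pathElems_singleton (v : N) : pathElems [v] = {Sum.inl v} := by
  simp [pathElems]

lemma pathElems_cons_cons (u w : N) (l : List N) :
    pathElems (u :: w :: l) =
      insert (Sum.inl u) (insert (Sum.inr (u, w)) (pathElems (w :: l))) := by
  ext e; simp [pathElems]; aesop

lemma pathElems_subset_append (p q : List N) : pathElems p ⊆ pathElems (p ++ q) := by
  induction p with
  | nil => simp [pathElems]
  | cons u p ih =>
    cases p with
    | nil => simp [pathElems_singleton, mem_pathElems_inl]
    | cons w l =>
      rw [List.cons_append, List.cons_append, pathElems_cons_cons, pathElems_cons_cons]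
      exact insert_subset_insert _ (insert_subset_insert _ ih)

lemma pathElems_concat_subset {p : List N} {u : N} (hu : p.getLast? = some u) (v : N) :
    pathElems (p ++ [v]) ⊆ insert (Sum.inl v) (insert (Sum.inr (u, v)) (pathElems p)) := by
  induction p with
  | nil => simp at hu
  | cons x p ih =>
    cases p with
    | nil =>
      obtain rfl : x = u := by simpa using hu
      simp [pathElems_cons_cons, pathElems_singleton, Finset.insert_subset_iff]
    | cons w l =>
      have := ih (by simpa using hu)
      simp only [List.cons_append, pathElems_cons_cons] at this ⊢
      grind

lemma IsPathOn.exists_prefix {s u v : N} {p : List N} (hp : IsPathOn Arcs s u p) (hv : v ∈ p) :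
    ∃ q, IsPathOn Arcs s v q ∧ pathElems q ⊆ pathElems p := by
  obtain ⟨l, r, rfl⟩ := List.append_of_mem hv
  obtain ⟨hs, -, hnd, hch⟩ := isPathOn_iff.1 hp
  have hpre : l ++ [v] <+: l ++ v :: r := ⟨r, by simp⟩
  refine ⟨l ++ [v], ⟨?_, by simp, hnd.sublist hpre.sublist, hch.prefix hpre⟩, ?_⟩
  · cases l <;> simpa using hs
  · simpa using pathElems_subset_append (l ++ [v]) r

lemma IsPathOn.exists_path_to_head {s : N} {a : N × N} {p : List N} (hp : IsPathOn Arcs s a.1 p)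
    (ha : a ∈ Arcs) :
    ∃ q, IsPathOn Arcs s a.2 q ∧
      pathElems q \ {Sum.inl a.2} ⊆ insert (Sum.inr a) (pathElems p) := by
  by_cases hv : a.2 ∈ p
  · obtain ⟨q, hq, hsub⟩ := hp.exists_prefix hv
    exact ⟨q, hq, sdiff_subset.trans (hsub.trans (subset_insert _ _))⟩
  · refine ⟨p ++ [a.2], hp.concat ha hv, fun e he => ?_⟩
    obtain ⟨he, hne⟩ := mem_sdiff.1 he
    have := pathElems_concat_subset hp.2.1 a.2 he
    simp_all

end Paths

theorem List.IsChain.exists_mem_Ico {β : Type*} {a b : β → ℝ} {T τ : ℝ} {l : List β}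
    (hl : l.IsChain (fun x y => T ≤ b x ∨ a y ≤ b x)) {x z : β} (hx : l.head? = some x)
    (hz : l.getLast? = some z) (hax : a x ≤ τ) (hbz : T ≤ b z) (hτ : τ < T) :
    ∃ e ∈ l, τ ∈ Set.Ico (a e) (b e) := by
  induction l generalizing x with
  | nil => simp at hx
  | cons y l ih =>
    obtain rfl : y = x := by simpa using hx
    by_cases hy : τ < b y
    · exact ⟨y, List.mem_cons_self, hax, hy⟩
    replace hy := not_lt.1 hy
    cases l with
    | nil =>
      obtain rfl : y = z := by simpa using hz
      linarith
    | cons w l =>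
      obtain ⟨hyw, hl⟩ := List.isChain_cons_cons.1 hl
      have haw : a w ≤ τ := by rcases hyw with h | h <;> linarith
      obtain ⟨e, he, hτe⟩ := ih hl rfl (by simpa using hz) haw
      exact ⟨e, List.mem_cons_of_mem _ he, hτe⟩

section ElemSeq

variable {N : Type*}

def pathElemSeq : List N → List (N ⊕ N × N)
  | [] => []
  | [v] => [.inl v]
  | u :: w :: l => .inl u :: .inr (u, w) :: pathElemSeq (w :: l)

lemma pathElemSeq_head? (p : List N) : (pathElemSeq p).head? = p.head?.map Sum.inl := by
  fun_cases pathElemSeq p <;> simp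

lemma pathElemSeq_getLast? (p : List N) :
    (pathElemSeq p).getLast? = p.getLast?.map Sum.inl := by
  fun_induction pathElemSeq p with
  | case1 => rfl
  | case2 => rfl
  | case3 u w l ih => cases l <;> simp_all [pathElemSeq]

lemma isChain_pathElemSeq {R : N → N → Prop} {S : N ⊕ N × N → N ⊕ N × N → Prop}
    (hS : ∀ u w, R u w → S (.inl u) (.inr (u, w)) ∧ S (.inr (u, w)) (.inl w))
    {p : List N} (hp : p.IsChain R) : (pathElemSeq p).IsChain S := by
  fun_induction pathElemSeq p with
  | case1 => exact .nil
  | case2 v => exact .singleton _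
  | case3 u w l ih =>
    obtain ⟨huw, hp⟩ := List.isChain_cons_cons.1 hp
    have := ih hp
    cases l <;> simp_all [pathElemSeq]

lemma mem_pathElems_of_mem_pathElemSeq [DecidableEq N] {p : List N} {e : N ⊕ N × N}
    (he : e ∈ pathElemSeq p) : e ∈ pathElems p := by
  fun_induction pathElemSeq p with
  | case1 => simp at he
  | case2 v => simpa [pathElems_singleton] using he
  | case3 u w l ih =>
    rw [pathElems_cons_cons]
    simp only [List.mem_cons, Finset.mem_insert] at he ⊢
    tauto

end ElemSeq

section TruncatedDist

variable {N : Type*} [DecidableEq N] {Arcs : Finset (N × N)} {s : N}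
  {μ ρ α : N ⊕ N × N → ℝ}

/-- `α = min (d, 1 - ρ)` with `d` the distance from `s` for the costs `μ + ρ`, written as two
upper bounds one of which is attained. -/
structure IsTruncatedDist (Arcs : Finset (N × N)) (s : N) (μ ρ α : N ⊕ N × N → ℝ) : Prop where
  le_one_sub : ∀ e, α e ≤ 1 - ρ e
  inl_le : ∀ v p, IsPathOn Arcs s v p → α (.inl v) ≤ ∑ f ∈ pathElems p \ {.inl v}, (μ f + ρ f)
  inr_le : ∀ a ∈ Arcs, ∀ p, IsPathOn Arcs s a.1 p → α (.inr a) ≤ ∑ f ∈ pathElems p, (μ f + ρ f)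
  inl_eq_or : ∀ v, α (.inl v) = 1 - ρ (.inl v) ∨
    ∃ p, IsPathOn Arcs s v p ∧ α (.inl v) = ∑ f ∈ pathElems p \ {.inl v}, (μ f + ρ f)
  inr_eq_or : ∀ a, α (.inr a) = 1 - ρ (.inr a) ∨
    a ∈ Arcs ∧ ∃ p, IsPathOn Arcs s a.1 p ∧ α (.inr a) = ∑ f ∈ pathElems p, (μ f + ρ f)

namespace IsTruncatedDist

lemma nonneg (hα : IsTruncatedDist Arcs s μ ρ α) (hc : ∀ f, 0 ≤ μ f + ρ f) (hρ : ∀ f, ρ f ≤ 1)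
    (e : N ⊕ N × N) : 0 ≤ α e := by
  have hsum (S : Finset (N ⊕ N × N)) : 0 ≤ ∑ f ∈ S, (μ f + ρ f) := sum_nonneg fun f _ => hc f
  rcases e with v | a
  · rcases hα.inl_eq_or v with h | ⟨p, -, h⟩ <;> rw [h]
    exacts [by linarith [hρ (.inl v)], hsum _]
  · rcases hα.inr_eq_or a with h | ⟨-, p, -, h⟩ <;> rw [h]
    exacts [by linarith [hρ (.inr a)], hsum _]

lemma source_nonpos (hα : IsTruncatedDist Arcs s μ ρ α) : α (.inl s) ≤ 0 := by
  simpa [pathElems_singleton] using hα.inl_le s [s] (isPathOn_singleton s)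

lemma one_le_or_inr_le (hα : IsTruncatedDist Arcs s μ ρ α) (hμ : ∀ f, 0 ≤ μ f) {a : N × N}
    (ha : a ∈ Arcs) :
    1 ≤ α (.inl a.1) + ρ (.inl a.1) + μ (.inl a.1) ∨
      α (.inr a) ≤ α (.inl a.1) + ρ (.inl a.1) + μ (.inl a.1) := by
  rcases hα.inl_eq_or a.1 with h | ⟨p, hp, h⟩
  · left; linarith [hμ (.inl a.1)]
  · right
    have hmem : Sum.inl a.1 ∈ pathElems p :=
      mem_pathElems_inl.2 (List.mem_of_mem_getLast? hp.2.1)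
    calc α (.inr a) ≤ ∑ f ∈ pathElems p, (μ f + ρ f) := hα.inr_le a ha p hp
      _ = ∑ f ∈ pathElems p \ {.inl a.1}, (μ f + ρ f) + (μ (.inl a.1) + ρ (.inl a.1)) :=
          sum_eq_sum_sdiff_singleton_add hmem _
      _ = _ := by rw [h]; ring

lemma one_le_or_inl_snd_le (hα : IsTruncatedDist Arcs s μ ρ α) (hμ : ∀ f, 0 ≤ μ f)
    (hc : ∀ f, 0 ≤ μ f + ρ f) {a : N × N} (ha : a ∈ Arcs) :
    1 ≤ α (.inr a) + ρ (.inr a) + μ (.inr a) ∨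
      α (.inl a.2) ≤ α (.inr a) + ρ (.inr a) + μ (.inr a) := by
  rcases hα.inr_eq_or a with h | ⟨-, p, hp, h⟩
  · left; linarith [hμ (.inr a)]
  · right
    obtain ⟨q, hq, hsub⟩ := hp.exists_path_to_head ha
    calc α (.inl a.2) ≤ ∑ f ∈ pathElems q \ {.inl a.2}, (μ f + ρ f) := hα.inl_le _ q hq
      _ ≤ ∑ f ∈ insert (.inr a) (pathElems p), (μ f + ρ f) :=
          sum_le_sum_of_subset_of_nonneg hsub fun f _ _ => hc f
      _ ≤ ∑ f ∈ pathElems p, (μ f + ρ f) + (μ (.inr a) + ρ (.inr a)) := by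
          by_cases hap : Sum.inr a ∈ pathElems p
          · rw [insert_eq_of_mem hap]; linarith [hc (.inr a)]
          · rw [sum_insert hap, add_comm]
      _ = _ := by rw [h]; ring

lemma one_le_target (hα : IsTruncatedDist Arcs s μ ρ α) (hμ : ∀ f, 0 ≤ μ f) {t : N}
    (hcond : ∀ p, IsPathOn Arcs s t p → 1 - ∑ e ∈ pathElems p, μ e ≤ ∑ e ∈ pathElems p, ρ e) :
    1 ≤ α (.inl t) + ρ (.inl t) + μ (.inl t) := by
  rcases hα.inl_eq_or t with h | ⟨p, hp, h⟩
  · linarith [hμ (.inl t)]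
  · have hmem : Sum.inl t ∈ pathElems p := mem_pathElems_inl.2 (List.mem_of_mem_getLast? hp.2.1)
    have hsplit := sum_eq_sum_sdiff_singleton_add hmem (fun f => μ f + ρ f)
    rw [sum_add_distrib, ← h] at hsplit
    linarith [hcond p hp]

lemma exists_mem_Ico (hα : IsTruncatedDist Arcs s μ ρ α) (hμ : ∀ f, 0 ≤ μ f)
    (hc : ∀ f, 0 ≤ μ f + ρ f) {t : N}
    (hcond : ∀ p, IsPathOn Arcs s t p → 1 - ∑ e ∈ pathElems p, μ e ≤ ∑ e ∈ pathElems p, ρ e)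
    {p : List N} (hp : IsPathOn Arcs s t p) {τ : ℝ} (hτ : τ ∈ Set.Ico (0 : ℝ) 1) :
    ∃ e ∈ pathElems p, τ ∈ Set.Ico (α e) (α e + ρ e + μ e) := by
  obtain ⟨hs, ht, -, hch⟩ := isPathOn_iff.1 hp
  have hseq : (pathElemSeq p).IsChain
      (fun x y => 1 ≤ α x + ρ x + μ x ∨ α y ≤ α x + ρ x + μ x) :=
    isChain_pathElemSeq
      (fun _ _ ha => ⟨hα.one_le_or_inr_le hμ ha, hα.one_le_or_inl_snd_le hμ hc ha⟩) hch
  obtain ⟨e, he, hτe⟩ := hseq.exists_mem_Ico (by simp [pathElemSeq_head?, hs])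
    (by simp [pathElemSeq_getLast?, ht]) (hα.source_nonpos.trans hτ.1) (hα.one_le_target hμ hcond)
    hτ.2
  exact ⟨e, mem_pathElems_of_mem_pathElemSeq he, hτe⟩

end IsTruncatedDist

end TruncatedDist

lemma one_sub_sum_le_volume_real {ι : Type*} {H : Set ℝ} (P : Finset ι) (x w : ι → ℝ)
    (hw : ∀ i ∈ P, 0 ≤ w i) (hH : H ⊆ Set.Ico 0 1)
    (hcov : Set.Ico 0 1 ⊆ H ∪ ⋃ i ∈ P, Set.Ico (x i) (x i + w i)) :
    1 - ∑ i ∈ P, w i ≤ volume.real H := by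
  set G := ⋃ i ∈ P, Set.Ico (x i) (x i + w i)
  have hG : volume.real G ≤ ∑ i ∈ P, w i := by
    refine (measureReal_biUnion_finset_le _ _).trans (sum_le_sum fun i hi => ?_)
    rw [Real.volume_real_Ico_of_le (by linarith [hw i hi])]
    linarith
  have hfin : volume (H ∪ G) ≠ ⊤ := by
    refine (measure_union_lt_top ((measure_mono hH).trans_lt ?_) ?_).ne
    · simp
    · exact measure_biUnion_lt_top P.finite_toSet fun i _ => measure_Ico_lt_top
  calc 1 - ∑ i ∈ P, w i ≤ volume.real (Set.Ico (0 : ℝ) 1) - volume.real G := by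
        rw [Real.volume_real_Ico_of_le zero_le_one]; linarith
    _ ≤ volume.real (H ∪ G) - volume.real G :=
        sub_le_sub_right (measureReal_mono hcov hfin) _
    _ ≤ volume.real H := by linarith [measureReal_union_le (μ := volume) H G]

section LevelSet

variable {N : Type*} [Fintype N] {α ρ : N ⊕ N × N → ℝ}

lemma mem_levelSet {τ : ℝ} {e : N ⊕ N × N} :
    e ∈ levelSet α ρ τ ↔ τ ∈ Set.Ico (α e) (α e + ρ e) := by
  simp [levelSet]

lemma volume_real_setOf_mem_levelSet {e : N ⊕ N × N} (h0 : 0 ≤ α e) (h1 : α e + ρ e ≤ 1)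
    (hρ : 0 ≤ ρ e) : volume.real {τ ∈ Set.Ico (0 : ℝ) 1 | e ∈ levelSet α ρ τ} = ρ e := by
  have hset : {τ ∈ Set.Ico (0 : ℝ) 1 | e ∈ levelSet α ρ τ} = Set.Ico (α e) (α e + ρ e) := by
    ext τ
    simp only [mem_levelSet, Set.mem_Ico]
    constructor
    · exact fun h => h.2
    · exact fun h => ⟨⟨h0.trans h.1, h.2.trans_le h1⟩, h⟩
  rw [hset, Real.volume_real_Ico_of_le (by linarith)]
  ring

lemma one_sub_sum_le_volume_real_hitting [DecidableEq N] {μ : N ⊕ N × N → ℝ}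
    {P : Finset (N ⊕ N × N)} (hμ : ∀ e ∈ P, 0 ≤ μ e)
    (hcov : ∀ τ ∈ Set.Ico (0 : ℝ) 1, ∃ e ∈ P, τ ∈ Set.Ico (α e) (α e + ρ e + μ e)) :
    1 - ∑ e ∈ P, μ e ≤ volume.real {τ ∈ Set.Ico (0 : ℝ) 1 | (levelSet α ρ τ ∩ P).Nonempty} := by
  refine one_sub_sum_le_volume_real P (fun e => α e + ρ e) μ hμ (Set.sep_subset _ _) ?_
  intro τ hτ
  obtain ⟨e, he, hαe, hτe⟩ := hcov τ hτ
  by_cases hρe : τ < α e + ρ e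
  · exact Or.inl ⟨hτ, e, mem_inter.2 ⟨mem_levelSet.2 ⟨hαe, hρe⟩, he⟩⟩
  · exact Or.inr (Set.mem_biUnion he ⟨not_lt.1 hρe, hτe⟩)

end LevelSet

/-- Digraph specialization of the decomposition theorem: with `α` the truncation at
`1 - ρ` of the shortest-path distances (w.r.t. node and arc costs `μ + ρ`, counting
all elements strictly before the element), the random set
`S_τ = {e : α_e ≤ τ < α_e + ρ_e}` for `τ` uniform on `[0,1)` has marginals `ρ` and
hits every `s`-`t`-path `P` with probability at least `1 − ∑_{e∈P} μ_e`. -/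
theorem digraph_feasible_decomposition
    (Arcs : Finset (V × V)) (s t : V)
    (ρ μ : V ⊕ V × V → ℝ)
    (hρ : ∀ e, 0 ≤ ρ e ∧ ρ e ≤ 1) (hμ : ∀ e, 0 ≤ μ e ∧ μ e ≤ 1)
    (hcond : ∀ p : List V, IsPathOn Arcs s t p →
      1 - ∑ e ∈ pathElems p, μ e ≤ ∑ e ∈ pathElems p, ρ e)
    (α : V ⊕ V × V → ℝ)
    -- `α_e = min {d_e, 1 - ρ_e}`, where `d` is the shortest-path distance to `e`
    -- w.r.t. costs `μ + ρ`, counting all nodes and arcs strictly before `e`: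
    (hα₁ : ∀ e, α e ≤ 1 - ρ e)
    (hα₂ : ∀ v : V, ∀ p : List V, IsPathOn Arcs s v p →
      α (Sum.inl v) ≤ ∑ f ∈ pathElems p \ {Sum.inl v}, (μ f + ρ f))
    (hα₃ : ∀ a ∈ Arcs, ∀ p : List V, IsPathOn Arcs s a.1 p →
      α (Sum.inr a) ≤ ∑ f ∈ pathElems p, (μ f + ρ f))
    (hα₄ : ∀ e : V ⊕ V × V, α e = 1 - ρ e ∨
      (∃ v : V, e = Sum.inl v ∧ ∃ p : List V, IsPathOn Arcs s v p ∧
        α e = ∑ f ∈ pathElems p \ {Sum.inl v}, (μ f + ρ f)) ∨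
      (∃ a ∈ Arcs, e = Sum.inr a ∧ ∃ p : List V, IsPathOn Arcs s a.1 p ∧
        α e = ∑ f ∈ pathElems p, (μ f + ρ f))) :
    (∀ e, (volume {τ ∈ Set.Ico (0:ℝ) 1 | e ∈ levelSet α ρ τ}).toReal = ρ e) ∧
    (∀ p : List V, IsPathOn Arcs s t p →
      1 - ∑ e ∈ pathElems p, μ e ≤
        (volume {τ ∈ Set.Ico (0:ℝ) 1 |
          ((levelSet α ρ τ) ∩ pathElems p).Nonempty}).toReal) := by
  have hμ₀ e : 0 ≤ μ e := (hμ e).1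
  have hc e : 0 ≤ μ e + ρ e := add_nonneg (hμ e).1 (hρ e).1
  have hα : IsTruncatedDist Arcs s μ ρ α := by
    refine ⟨hα₁, hα₂, hα₃, fun v => ?_, fun a => ?_⟩
    · rcases hα₄ (.inl v) with h | ⟨w, hw, p, hp, h⟩ | ⟨a, -, ha, -⟩
      · exact .inl h
      · cases hw; exact .inr ⟨p, hp, h⟩
      · cases ha
    · rcases hα₄ (.inr a) with h | ⟨v, hv, -⟩ | ⟨b, hb, hab, p, hp, h⟩
      · exact .inl h
      · cases hv
      · cases hab; exact .inr ⟨hb, p, hp, h⟩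
  refine ⟨fun e => ?_, fun p hp => ?_⟩
  · exact volume_real_setOf_mem_levelSet (hα.nonneg hc (fun f => (hρ f).2) e)
      (by linarith [hα.le_one_sub e]) (hρ e).1
  · exact one_sub_sum_le_volume_real_hitting (fun e _ => hμ₀ e)
      fun τ hτ => hα.exists_mem_Ico hμ₀ hc hcond hp hτ
end

section
/- Let (E, 𝒫) be a set system with the weak MFMC property, μ ∈ [0,1]^E, π_P := 1 − ∑_{e∈P} μ_e, and ρ ∈ [0,1]^E with ∑_{e∈P}(ρ_e + μ_e) ≥ 1 for all P ∈ 𝒫. Write y := ρ + μ as y = ∑_{S∈𝒮} λ_S 1_S + r, where 𝒮 is the family of covers of 𝒫, λ ≥ 0 with ∑_S λ_S = 1, and r ∈ ℝ_+^E. Let T_1 be the random cover with Pr[T_1 = S] = λ_S, and independently let T_2 := {e : y_e > r_e, τ < ρ_e/(y_e − r_e)} for τ uniform on [0,1]. Then T := T_1 ∩ T_2 satisfies Pr[e ∈ T] = min{ρ_e, y_e − r_e} ≤ ρ_e for all e ∈ E, and Pr[T ∩ P ≠ ∅] ≥ π_P for all P ∈ 𝒫. -/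
open Finset MeasureTheory

variable {E : Type*} [Fintype E] [DecidableEq E]

/-- The covering polyhedron `Y_𝒫 = {y ∈ ℝ₊^E : ∑_{e ∈ P} y_e ≥ 1 ∀ P ∈ 𝒫}`. -/
def coverPolyhedron (Ps : Finset (Finset E)) : Set (E → ℝ) :=
  {y | (∀ e, 0 ≤ y e) ∧ ∀ P ∈ Ps, 1 ≤ ∑ e ∈ P, y e}

/-- The threshold set `T₂(τ) = {e : y_e > r_e, τ < ρ_e/(y_e − r_e)}`. -/
noncomputable def thresholdSet (y r ρ : E → ℝ) (τ : ℝ) : Finset E :=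
  Finset.univ.filter (fun e => r e < y e ∧ τ < ρ e / (y e - r e))

/-!
The random cover `T₁` contains `e` with probability `m_e := ∑_{S ∋ e} λ_S = y_e − r_e`, and `T₂`
contains `e` with probability `min{ρ_e / m_e, 1}`, so `e ∈ T` with probability `min{ρ_e, m_e}`.
Every cover `S` in the support of `T₁` meets `P`, so for each such `S` the event `S ∩ T₂ ∩ P = ∅`
is contained in `⋃_{e ∈ S ∩ P} {e ∉ T₂}`; averaging the union bound over `T₁` bounds the miss
probability of `P` by `∑_{e ∈ P} m_e (1 − Pr[e ∈ T₂]) = ∑_{e ∈ P} (m_e − min{ρ_e, m_e})`, and each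
summand is at most `μ_e` because `m_e ≤ y_e = ρ_e + μ_e`.
-/

/-- `Pr[e ∈ T₁]` for the random set `T₁` with distribution `lam`. -/
def marginal (lam : Finset E → ℝ) (e : E) : ℝ :=
  ∑ S ∈ univ.filter (fun S : Finset E => e ∈ S), lam S

theorem marginal_nonneg {lam : Finset E → ℝ} (hlam0 : ∀ S, 0 ≤ lam S) (e : E) :
    0 ≤ marginal lam e :=
  sum_nonneg fun S _ => hlam0 S

theorem sum_sum_inter_mul_eq_sum_marginal_mul (lam : Finset E → ℝ) (f : E → ℝ) (P : Finset E) :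
    ∑ S : Finset E, ∑ e ∈ S ∩ P, lam S * f e = ∑ e ∈ P, marginal lam e * f e := by
  simp_rw [inter_comm _ P, ← sum_ite_mem, marginal, sum_filter, sum_mul]
  rw [sum_comm]
  refine sum_congr rfl fun e _ => sum_congr rfl fun S _ => ?_
  split_ifs <;> simp

/-- The union bound averaged over `lam`: `w S` stands for the probability of hitting `S ∩ P`,
and `v e` for that of hitting `e`. -/
theorem one_sub_sum_mul_le_sum_marginal_mul {lam : Finset E → ℝ} {P : Finset E}
    {v : E → ℝ} {w : Finset E → ℝ}
    (hlam0 : ∀ S, 0 ≤ lam S) (hlam1 : ∑ S : Finset E, lam S = 1)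
    (hsupp : ∀ S, lam S ≠ 0 → (S ∩ P).Nonempty)
    (hv : ∀ e, v e ≤ 1) (hvw : ∀ S, ∀ e ∈ S ∩ P, v e ≤ w S) :
    1 - ∑ S : Finset E, lam S * w S ≤ ∑ e ∈ P, marginal lam e * (1 - v e) := by
  have hmiss : ∀ S, lam S * (1 - w S) ≤ ∑ e ∈ S ∩ P, lam S * (1 - v e) := by
    intro S
    rcases eq_or_ne (lam S) 0 with hS | hS
    · simp [hS]
    obtain ⟨e, he⟩ := hsupp S hS
    calc lam S * (1 - w S) ≤ lam S * (1 - v e) := by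
          gcongr
          · exact hlam0 S
          · exact hvw S e he
      _ ≤ ∑ e ∈ S ∩ P, lam S * (1 - v e) :=
          single_le_sum (f := fun e => lam S * (1 - v e))
            (fun e _ => mul_nonneg (hlam0 S) (sub_nonneg.2 (hv e))) he
  calc 1 - ∑ S : Finset E, lam S * w S = ∑ S : Finset E, lam S * (1 - w S) := by
        simp only [mul_sub, mul_one, sum_sub_distrib, hlam1]
    _ ≤ ∑ S : Finset E, ∑ e ∈ S ∩ P, lam S * (1 - v e) := sum_le_sum fun S _ => hmiss S
    _ = ∑ e ∈ P, marginal lam e * (1 - v e) := sum_sum_inter_mul_eq_sum_marginal_mul _ _ _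

theorem toReal_volume_Ico_sep_le_one (p : ℝ → Prop) :
    (volume {τ ∈ Set.Ico (0 : ℝ) 1 | p τ}).toReal ≤ 1 := by
  simpa [measureReal_def] using
    measureReal_mono (μ := volume) (Set.sep_subset (Set.Ico (0 : ℝ) 1) p) (by simp)

theorem toReal_volume_Ico_sep_mono {p q : ℝ → Prop} (hpq : ∀ τ, p τ → q τ) :
    (volume {τ ∈ Set.Ico (0 : ℝ) 1 | p τ}).toReal ≤
      (volume {τ ∈ Set.Ico (0 : ℝ) 1 | q τ}).toReal :=
  measureReal_mono (fun τ hτ => ⟨hτ.1, hpq τ hτ.2⟩)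
    (ne_top_of_le_ne_top (by simp) (measure_mono (Set.sep_subset _ q)))

theorem toReal_volume_Ico_sep_lt {c : ℝ} (hc : 0 ≤ c) :
    (volume {τ ∈ Set.Ico (0 : ℝ) 1 | τ < c}).toReal = min c 1 := by
  have hset : {τ ∈ Set.Ico (0 : ℝ) 1 | τ < c} = Set.Ico 0 (min c 1) := by
    ext τ
    simp only [Set.mem_ofPred_eq, Set.mem_Ico, lt_min_iff]
    tauto
  rw [hset, Real.volume_Ico, sub_zero, ENNReal.toReal_ofReal (le_min hc zero_le_one)]

theorem sub_mul_toReal_volume_mem_thresholdSet {ι : Type*} [Fintype ι] {y r ρ : ι → ℝ} {e : ι}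
    (hρ : 0 ≤ ρ e) (hry : r e ≤ y e) :
    (y e - r e) * (volume {τ ∈ Set.Ico (0 : ℝ) 1 | e ∈ thresholdSet y r ρ τ}).toReal =
      min (ρ e) (y e - r e) := by
  rcases hry.lt_or_eq with hlt | heq
  · have hpos : 0 < y e - r e := sub_pos.2 hlt
    simp only [thresholdSet, mem_filter, mem_univ, true_and, hlt]
    rw [toReal_volume_Ico_sep_lt (div_nonneg hρ hpos.le), mul_min_of_nonneg _ _ hpos.le,
      mul_div_cancel₀ _ hpos.ne', mul_one]
  · simp [heq, hρ]

theorem mfmc_intersection_construction_general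
    (Ps : Finset (Finset E))
    (μ : E → ℝ) (hμ : ∀ e, 0 ≤ μ e ∧ μ e ≤ 1)
    (π : Finset E → ℝ) (hπ : ∀ P ∈ Ps, π P = 1 - ∑ e ∈ P, μ e)
    (ρ : E → ℝ) (hρ : ∀ e, 0 ≤ ρ e ∧ ρ e ≤ 1)
    (y : E → ℝ) (hy : ∀ e, y e = ρ e + μ e)
    (lam : Finset E → ℝ) (r : E → ℝ)
    (hlam0 : ∀ S, 0 ≤ lam S) (hlam1 : ∑ S : Finset E, lam S = 1)
    (hsupp : ∀ S : Finset E, lam S ≠ 0 → ∀ P ∈ Ps, (S ∩ P).Nonempty)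
    (hr : ∀ e, 0 ≤ r e)
    (hdecomp : ∀ e : E,
      y e = (∑ S ∈ Finset.univ.filter (fun S : Finset E => e ∈ S), lam S) + r e) :
    (∀ e : E,
      (∑ S ∈ Finset.univ.filter (fun S : Finset E => e ∈ S), lam S) *
          (volume {τ ∈ Set.Ico (0:ℝ) 1 | e ∈ thresholdSet y r ρ τ}).toReal =
        min (ρ e) (y e - r e) ∧ min (ρ e) (y e - r e) ≤ ρ e) ∧
    (∀ P ∈ Ps, π P ≤
      ∑ S : Finset E, lam S *
        (volume {τ ∈ Set.Ico (0:ℝ) 1 |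
          ((S ∩ thresholdSet y r ρ τ) ∩ P).Nonempty}).toReal) := by
  have hmarginal : ∀ e, marginal lam e = y e - r e := fun e => eq_sub_of_add_eq (hdecomp e).symm
  have hhit : ∀ e, marginal lam e *
      (volume {τ ∈ Set.Ico (0:ℝ) 1 | e ∈ thresholdSet y r ρ τ}).toReal = min (ρ e) (y e - r e) := by
    intro e
    rw [hmarginal]
    exact sub_mul_toReal_volume_mem_thresholdSet (hρ e).1
      (sub_nonneg.1 (hmarginal e ▸ marginal_nonneg hlam0 e))
  refine ⟨fun e => ⟨hhit e, min_le_left _ _⟩, fun P hP => ?_⟩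
  have hunion := one_sub_sum_mul_le_sum_marginal_mul
    (v := fun e => (volume {τ ∈ Set.Ico (0:ℝ) 1 | e ∈ thresholdSet y r ρ τ}).toReal)
    (w := fun S => (volume {τ ∈ Set.Ico (0:ℝ) 1 |
      ((S ∩ thresholdSet y r ρ τ) ∩ P).Nonempty}).toReal)
    hlam0 hlam1 (fun S hS => hsupp S hS P hP) (fun e => toReal_volume_Ico_sep_le_one _)
    (fun S e he => toReal_volume_Ico_sep_mono fun τ hτ => ⟨e, by simp_all [mem_inter]⟩)
  have hmiss : ∀ e ∈ P, marginal lam e *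
      (1 - (volume {τ ∈ Set.Ico (0:ℝ) 1 | e ∈ thresholdSet y r ρ τ}).toReal) ≤ μ e := by
    intro e _
    rw [mul_one_sub, hhit, hmarginal]
    rcases min_cases (ρ e) (y e - r e) with ⟨hmin, _⟩ | ⟨hmin, _⟩ <;> rw [hmin]
    · linarith [hy e, hr e]
    · linarith [(hμ e).1]
  rw [hπ P hP]
  linarith [sum_le_sum hmiss]

/-- Given a decomposition `y = ρ + μ = ∑_S λ_S 1_S + r` of `y ∈ Y_𝒫` into a convex
combination of incidence vectors of covers `S` plus a nonnegative vector `r`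
(guaranteed to exist by the weak MFMC property), the random set `T = T₁ ∩ T₂`, where
`T₁` is the random cover with `Pr[T₁ = S] = λ_S` and independently
`T₂ = {e : y_e > r_e, τ < ρ_e/(y_e − r_e)}` for `τ` uniform on `[0,1)`, satisfies
`Pr[e ∈ T] = min{ρ_e, y_e − r_e} ≤ ρ_e` and `Pr[T ∩ P ≠ ∅] ≥ π_P = 1 − ∑_{e∈P} μ_e`. -/
theorem mfmc_intersection_construction
    (Ps : Finset (Finset E))
    (hMFMC : ∀ w ∈ Set.extremePoints ℝ (coverPolyhedron Ps), ∀ e, ∃ n : ℤ, w e = n)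
    (μ : E → ℝ) (hμ : ∀ e, 0 ≤ μ e ∧ μ e ≤ 1)
    (π : Finset E → ℝ) (hπ : ∀ P ∈ Ps, π P = 1 - ∑ e ∈ P, μ e)
    (ρ : E → ℝ) (hρ : ∀ e, 0 ≤ ρ e ∧ ρ e ≤ 1)
    (hcond : ∀ P ∈ Ps, 1 ≤ ∑ e ∈ P, (ρ e + μ e))
    (y : E → ℝ) (hy : ∀ e, y e = ρ e + μ e)
    (lam : Finset E → ℝ) (r : E → ℝ)
    (hlam0 : ∀ S, 0 ≤ lam S) (hlam1 : ∑ S : Finset E, lam S = 1)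
    (hsupp : ∀ S : Finset E, lam S ≠ 0 → ∀ P ∈ Ps, (S ∩ P).Nonempty)
    (hr : ∀ e, 0 ≤ r e)
    (hdecomp : ∀ e : E,
      y e = (∑ S ∈ Finset.univ.filter (fun S : Finset E => e ∈ S), lam S) + r e) :
    (∀ e : E,
      (∑ S ∈ Finset.univ.filter (fun S : Finset E => e ∈ S), lam S) *
          (volume {τ ∈ Set.Ico (0:ℝ) 1 | e ∈ thresholdSet y r ρ τ}).toReal =
        min (ρ e) (y e - r e) ∧ min (ρ e) (y e - r e) ≤ ρ e) ∧
    (∀ P ∈ Ps, π P ≤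
      ∑ S : Finset E, lam S *
        (volume {τ ∈ Set.Ico (0:ℝ) 1 |
          ((S ∩ thresholdSet y r ρ τ) ∩ P).Nonempty}).toReal) :=
  mfmc_intersection_construction_general Ps μ hμ π hπ ρ hρ y hy lam r hlam0 hlam1 hsupp hr hdecomp
end
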